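/- arXiv:1908.05245 — 4 statements merged into one kernel-verified Lean document; each statement's English description precedes it below -/
import Mathlib

section
/- Let D ⊆ ℝ^N be open and convex, and let R : D → ℝ^N be continuously differentiable on D with Fréchet derivative J(U) at U ∈ D. Let U⁰ ∈ D be such that J(U⁰) is invertible, and suppose the affine covariant Lipschitz condition ‖J(U⁰)⁻¹ ∘ (J(U) − J(U⁰))‖ ≤ δ₀·‖U − U⁰‖ holds for all U ∈ D, with δ₀ > 0 (operator norm induced by the Euclidean norm). Define the simplified Newton iterates U^{s+1} = U^s − J(U⁰)⁻¹ R(U^s) for s = 0, 1, 2, …. Assume h₀ := δ₀·‖U¹ − U⁰‖ ≤ 1/2 and that the closed ball of radius ρ = (1 − √(1 − 2h₀))/δ₀ centered at U⁰ is contained in D. Then all iterates U^s remain in this closed ball, and the sequence (U^s) converges to some U* in the closed ball with R(U*) = 0. -/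
open Metric Filter

set_option maxHeartbeats 16000000 in
/-- Convergence of the simplified Newton method, Deuflhard.
Let `D ⊆ ℝ^N` be open and convex and `R : D → ℝ^N` continuously differentiable on `D` with
Fréchet derivative `J U` at `U ∈ D`.  Let `U⁰ ∈ D` be such that `J U⁰` is invertible (with
inverse `J0inv`), and assume the affine covariant Lipschitz condition
`‖J0inv ∘ (J U − J U⁰)‖ ≤ δ₀ ‖U − U⁰‖` on `D`.  Define the simplified Newton iterates
`U^{s+1} = U^s − J0inv (R (U^s))`.  If `h₀ = δ₀ ‖U¹ − U⁰‖ ≤ 1/2` and the closed ball of radius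
`ρ = (1 − √(1 − 2 h₀))/δ₀` around `U⁰` is contained in `D`, then all iterates remain in this
closed ball and converge to some `U*` in it with `R U* = 0`. -/
theorem simplified_newton_convergence {N : ℕ}
    (D : Set (EuclideanSpace ℝ (Fin N)))
    (hD_open : IsOpen D) (hD_conv : Convex ℝ D)
    (R : EuclideanSpace ℝ (Fin N) → EuclideanSpace ℝ (Fin N))
    (J : EuclideanSpace ℝ (Fin N) → EuclideanSpace ℝ (Fin N) →L[ℝ] EuclideanSpace ℝ (Fin N))
    (hJ : ∀ U ∈ D, HasFDerivAt R (J U) U)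
    (hJcont : ContinuousOn J D)
    (U0 : EuclideanSpace ℝ (Fin N)) (hU0 : U0 ∈ D)
    (J0inv : EuclideanSpace ℝ (Fin N) →L[ℝ] EuclideanSpace ℝ (Fin N))
    (hleft : J0inv.comp (J U0) = ContinuousLinearMap.id ℝ (EuclideanSpace ℝ (Fin N)))
    (hright : (J U0).comp J0inv = ContinuousLinearMap.id ℝ (EuclideanSpace ℝ (Fin N)))
    (δ₀ : ℝ) (hδ₀ : 0 < δ₀)
    (hLip : ∀ U ∈ D, ‖J0inv.comp (J U - J U0)‖ ≤ δ₀ * ‖U - U0‖)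
    (U : ℕ → EuclideanSpace ℝ (Fin N))
    (hUinit : U 0 = U0)
    (hUrec : ∀ s : ℕ, U (s + 1) = U s - J0inv (R (U s)))
    (h₀ : ℝ) (hh₀ : h₀ = δ₀ * ‖U 1 - U 0‖) (hh₀le : h₀ ≤ 1 / 2)
    (ρ : ℝ) (hρ : ρ = (1 - Real.sqrt (1 - 2 * h₀)) / δ₀)
    (hball : closedBall U0 ρ ⊆ D) :
    (∀ s : ℕ, U s ∈ closedBall U0 ρ) ∧
      ∃ Ustar ∈ closedBall U0 ρ, Tendsto U atTop (nhds Ustar) ∧ R Ustar = 0 := by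
  classical
  set a₀ : ℝ := ‖U 1 - U 0‖ with ha₀
  have ha₀0 : 0 ≤ a₀ := norm_nonneg _
  have hh₀0 : 0 ≤ h₀ := by rw [hh₀]; positivity
  have hsub0 : (0:ℝ) ≤ 1 - 2 * h₀ := by linarith
  set σ : ℝ := Real.sqrt (1 - 2 * h₀) with hσ
  have hσ0 : 0 ≤ σ := Real.sqrt_nonneg _
  have hσ2 : σ ^ 2 = 1 - 2 * h₀ := Real.sq_sqrt hsub0
  have hσle1 : σ ≤ 1 := by nlinarith
  have hδρ : δ₀ * ρ = 1 - σ := by rw [hρ]; field_simp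
  have hρ0 : 0 ≤ ρ := by
    rw [hρ]; apply div_nonneg _ hδ₀.le; linarith
  -- fixed point equation for the majorant
  have hfix : a₀ + δ₀ / 2 * ρ ^ 2 = ρ := by
    have h1 : δ₀ * a₀ = h₀ := hh₀.symm
    have h2 : δ₀ * (a₀ + δ₀ / 2 * ρ ^ 2) = δ₀ * ρ := by nlinarith
    exact mul_left_cancel₀ (ne_of_gt hδ₀) h2
  -- the majorant sequence
  obtain ⟨t, ht0, htsucc⟩ : ∃ t : ℕ → ℝ, t 0 = 0 ∧ ∀ s, t (s + 1) = a₀ + δ₀ / 2 * (t s) ^ 2 :=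
    ⟨fun s => Nat.rec 0 (fun _ ts => a₀ + δ₀ / 2 * ts ^ 2) s, rfl, fun s => rfl⟩
  have htnn : ∀ s, 0 ≤ t s := by
    intro s; cases s with
    | zero => exact le_of_eq ht0.symm
    | succ n => rw [htsucc]; positivity
  have htle : ∀ s, t s ≤ ρ := by
    intro s; induction s with
    | zero => rw [ht0]; exact hρ0
    | succ n ih =>
      rw [htsucc]
      have h1 : t n ^ 2 ≤ ρ ^ 2 := by nlinarith [htnn n]
      nlinarith
  have htmono : ∀ s, t s ≤ t (s + 1) := by
    intro s; induction s with
    | zero => rw [ht0, htsucc]; positivity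
    | succ n ih =>
      rw [htsucc n, htsucc (n+1)]
      have h1 : t n ^ 2 ≤ t (n + 1) ^ 2 := by nlinarith [htnn n, htnn (n+1)]
      have h2 := mul_le_mul_of_nonneg_left h1 (le_of_lt (half_pos hδ₀))
      linarith
  -- the simplified Newton map
  set F : EuclideanSpace ℝ (Fin N) → EuclideanSpace ℝ (Fin N) := fun x => x - J0inv (R x) with hF
  have hFrec : ∀ s, U (s + 1) = F (U s) := fun s => hUrec s
  have hFderiv : ∀ z ∈ D, HasFDerivAt F
      (ContinuousLinearMap.id ℝ (EuclideanSpace ℝ (Fin N)) - J0inv.comp (J z)) z := by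
    intro z hz
    exact (hasFDerivAt_id z).sub (J0inv.hasFDerivAt.comp z (hJ z hz))
  have hFnorm : ∀ z ∈ D, ‖ContinuousLinearMap.id ℝ (EuclideanSpace ℝ (Fin N)) - J0inv.comp (J z)‖ ≤ δ₀ * ‖z - U0‖ := by
    intro z hz
    have h1 : ContinuousLinearMap.id ℝ (EuclideanSpace ℝ (Fin N)) - J0inv.comp (J z)
        = -(J0inv.comp (J z - J U0)) := by
      rw [ContinuousLinearMap.comp_sub, hleft]; abel
    rw [h1, norm_neg]
    exact hLip z hz
  -- the key contraction estimate
  have hkey : ∀ x ∈ closedBall U0 ρ, ∀ y ∈ closedBall U0 ρ,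
      ‖F x - F y‖ ≤ δ₀ * ((‖x - U0‖ + ‖y - U0‖) / 2) * ‖x - y‖ := by
    intro x hx y hy
    set γ : ℝ → EuclideanSpace ℝ (Fin N) := fun τ => y + τ • (x - y) with hγ
    have hseg : ∀ τ ∈ Set.Icc (0:ℝ) 1,
        ‖γ τ - U0‖ ≤ (1 - τ) * ‖y - U0‖ + τ * ‖x - U0‖ := by
      intro τ hτ
      have heq : γ τ - U0 = (1 - τ) • (y - U0) + τ • (x - U0) := by
        simp only [hγ]; module
      rw [heq]
      calc ‖(1 - τ) • (y - U0) + τ • (x - U0)‖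
          ≤ ‖(1 - τ) • (y - U0)‖ + ‖τ • (x - U0)‖ := norm_add_le _ _
        _ = (1 - τ) * ‖y - U0‖ + τ * ‖x - U0‖ := by
            rw [norm_smul, norm_smul, Real.norm_eq_abs, Real.norm_eq_abs,
              abs_of_nonneg (by linarith [hτ.2]), abs_of_nonneg hτ.1]
    have hγD : ∀ τ ∈ Set.Icc (0:ℝ) 1, γ τ ∈ D := by
      intro τ hτ
      apply hball
      rw [mem_closedBall, dist_eq_norm]
      calc ‖γ τ - U0‖ ≤ (1 - τ) * ‖y - U0‖ + τ * ‖x - U0‖ := hseg τ hτ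
        _ ≤ (1 - τ) * ρ + τ * ρ := by
            have hxρ : ‖x - U0‖ ≤ ρ := by rw [← dist_eq_norm]; exact hx
            have hyρ : ‖y - U0‖ ≤ ρ := by rw [← dist_eq_norm]; exact hy
            have h1 : (0:ℝ) ≤ 1 - τ := by linarith [hτ.2]
            nlinarith [hτ.1]
        _ = ρ := by ring
    have hγderiv : ∀ τ : ℝ, HasDerivAt γ (x - y) τ := by
      intro τ
      have h := ((hasDerivAt_id τ).smul_const (x - y)).const_add y
      rw [one_smul] at h
      exact h
    set g : ℝ → EuclideanSpace ℝ (Fin N) := fun τ => F (γ τ) - F y with hg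
    set g' : ℝ → EuclideanSpace ℝ (Fin N) := fun τ =>
      (ContinuousLinearMap.id ℝ (EuclideanSpace ℝ (Fin N)) - J0inv.comp (J (γ τ))) (x - y) with hg'
    have hgderiv : ∀ τ ∈ Set.Icc (0:ℝ) 1, HasDerivAt g (g' τ) τ := by
      intro τ hτ
      exact (((hFderiv (γ τ) (hγD τ hτ)).comp_hasDerivAt τ (hγderiv τ)).sub_const (F y))
    set B : ℝ → ℝ := fun τ => δ₀ * ‖x - y‖ *
      (‖y - U0‖ * τ + (‖x - U0‖ - ‖y - U0‖) / 2 * τ ^ 2) with hB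
    set B' : ℝ → ℝ := fun τ => δ₀ * ‖x - y‖ *
      ((1 - τ) * ‖y - U0‖ + τ * ‖x - U0‖) with hB'
    have hBderiv : ∀ τ : ℝ, HasDerivAt B (B' τ) τ := by
      intro τ
      have h1 : HasDerivAt (fun τ : ℝ => ‖y - U0‖ * τ + (‖x - U0‖ - ‖y - U0‖) / 2 * τ ^ 2)
          (‖y - U0‖ * 1 + (‖x - U0‖ - ‖y - U0‖) / 2 * (((2:ℕ):ℝ) * τ ^ (2 - 1))) τ :=
        ((hasDerivAt_id τ).const_mul ‖y - U0‖).add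
          ((hasDerivAt_pow 2 τ).const_mul ((‖x - U0‖ - ‖y - U0‖) / 2))
      have h2 := h1.const_mul (δ₀ * ‖x - y‖)
      have h3 : δ₀ * ‖x - y‖ * (‖y - U0‖ * 1 +
          (‖x - U0‖ - ‖y - U0‖) / 2 * (((2:ℕ):ℝ) * τ ^ (2 - 1))) = B' τ := by
        simp only [hB']
        push_cast
        ring
      rw [hB, ← h3]
      exact h2
    have hbound : ∀ τ ∈ Set.Ico (0:ℝ) 1, ‖g' τ‖ ≤ B' τ := by
      intro τ hτ
      have hτ' : τ ∈ Set.Icc (0:ℝ) 1 := ⟨hτ.1, hτ.2.le⟩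
      calc ‖g' τ‖ ≤ ‖ContinuousLinearMap.id ℝ (EuclideanSpace ℝ (Fin N)) - J0inv.comp (J (γ τ))‖ * ‖x - y‖ :=
            (ContinuousLinearMap.id ℝ (EuclideanSpace ℝ (Fin N)) - J0inv.comp (J (γ τ))).le_opNorm _
        _ ≤ (δ₀ * ‖γ τ - U0‖) * ‖x - y‖ :=
            mul_le_mul_of_nonneg_right (hFnorm _ (hγD τ hτ')) (norm_nonneg _)
        _ ≤ (δ₀ * ((1 - τ) * ‖y - U0‖ + τ * ‖x - U0‖)) * ‖x - y‖ := by
            apply mul_le_mul_of_nonneg_right _ (norm_nonneg _)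
            exact mul_le_mul_of_nonneg_left (hseg τ hτ') hδ₀.le
        _ = B' τ := by simp only [hB']; ring
    have hmain := image_norm_le_of_norm_deriv_right_le_deriv_boundary
      (f := g) (f' := g') (a := 0) (b := 1)
      (fun τ hτ => ((hgderiv τ hτ).continuousAt).continuousWithinAt)
      (fun τ hτ => ((hgderiv τ ⟨hτ.1, hτ.2.le⟩).hasDerivWithinAt))
      (by simp [hg, hγ, hB]) hBderiv hbound
    have h1 : ‖g 1‖ ≤ B 1 := hmain (Set.right_mem_Icc.2 zero_le_one)
    have hg1 : g 1 = F x - F y := by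
      have hxy : y + (x - y) = x := by abel
      simp only [hg, hγ, one_smul, hxy]
    rw [hg1] at h1
    calc ‖F x - F y‖ ≤ B 1 := h1
      _ = δ₀ * ((‖x - U0‖ + ‖y - U0‖) / 2) * ‖x - y‖ := by simp only [hB]; ring
  -- main induction
  have hmain : ∀ s, ‖U s - U0‖ ≤ t s ∧ ‖U (s + 1) - U s‖ ≤ t (s + 1) - t s := by
    intro s; induction s with
    | zero =>
      constructor
      · simp [hUinit, ht0]
      · rw [ht0, htsucc, ht0]
        simp [← ha₀]
    | succ n ih =>
      obtain ⟨ih1, ih2⟩ := ih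
      have hUn : U n ∈ closedBall U0 ρ := by
        rw [mem_closedBall, dist_eq_norm]; exact ih1.trans (htle n)
      have hUn1norm : ‖U (n + 1) - U0‖ ≤ t (n + 1) := by
        calc ‖U (n + 1) - U0‖ ≤ ‖U (n + 1) - U n‖ + ‖U n - U0‖ := norm_sub_le_norm_sub_add_norm_sub _ _ _
          _ ≤ (t (n + 1) - t n) + t n := add_le_add ih2 ih1
          _ = t (n + 1) := by ring
      have hUn1 : U (n + 1) ∈ closedBall U0 ρ := by
        rw [mem_closedBall, dist_eq_norm]; exact hUn1norm.trans (htle (n + 1))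
      refine ⟨hUn1norm, ?_⟩
      have hstep : ‖U (n + 1 + 1) - U (n + 1)‖ ≤
          δ₀ * ((‖U (n + 1) - U0‖ + ‖U n - U0‖) / 2) * ‖U (n + 1) - U n‖ := by
        have h := hkey _ hUn1 _ hUn
        rw [← hFrec (n + 1), ← hFrec n] at h
        exact h
      have hd0 : 0 ≤ ‖U (n + 1) - U n‖ := norm_nonneg _
      have hA : (‖U (n + 1) - U0‖ + ‖U n - U0‖) / 2 * ‖U (n + 1) - U n‖
          ≤ (t (n + 1) + t n) / 2 * (t (n + 1) - t n) := by
        refine mul_le_mul ?_ ih2 hd0 ?_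
        · linarith
        · linarith [htnn n, htnn (n + 1)]
      have hend : δ₀ * ((‖U (n + 1) - U0‖ + ‖U n - U0‖) / 2) * ‖U (n + 1) - U n‖
          ≤ t (n + 1 + 1) - t (n + 1) := by
        calc δ₀ * ((‖U (n + 1) - U0‖ + ‖U n - U0‖) / 2) * ‖U (n + 1) - U n‖
            = δ₀ * ((‖U (n + 1) - U0‖ + ‖U n - U0‖) / 2 * ‖U (n + 1) - U n‖) := by ring
          _ ≤ δ₀ * ((t (n + 1) + t n) / 2 * (t (n + 1) - t n)) :=
              mul_le_mul_of_nonneg_left hA hδ₀.le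
          _ = t (n + 1 + 1) - t (n + 1) := by linear_combination htsucc n - htsucc (n + 1)
      exact hstep.trans hend
  have hballmem : ∀ s, U s ∈ closedBall U0 ρ := by
    intro s
    rw [mem_closedBall, dist_eq_norm]
    exact (hmain s).1.trans (htle s)
  refine ⟨hballmem, ?_⟩
  -- Cauchy sequence
  set d : ℕ → ℝ := fun n => t (n + 1) - t n with hd
  have hdsum : Summable d := by
    apply summable_of_sum_range_le (c := ρ) (fun n => by simpa [hd] using htmono n)
    intro n
    rw [Finset.sum_range_sub (f := t)]
    simpa [ht0] using htle n
  have hcauchy : CauchySeq U := by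
    apply cauchySeq_of_dist_le_of_summable d _ hdsum
    intro n
    rw [dist_comm, dist_eq_norm]
    exact (hmain n).2
  obtain ⟨Ustar, htend⟩ := cauchySeq_tendsto_of_complete hcauchy
  have hUstar_ball : Ustar ∈ closedBall U0 ρ :=
    Metric.isClosed_closedBall.mem_of_tendsto htend (Eventually.of_forall hballmem)
  have hUstarD : Ustar ∈ D := hball hUstar_ball
  -- R Ustar = 0
  have hFcont : ContinuousAt F Ustar := by
    have hRcont : ContinuousAt R Ustar := (hJ _ hUstarD).continuousAt
    exact continuousAt_id.sub (J0inv.continuous.continuousAt.comp hRcont)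
  have hfix' : F Ustar = Ustar := by
    have h1 : Tendsto (fun s => F (U s)) atTop (nhds (F Ustar)) := hFcont.tendsto.comp htend
    have h2 : Tendsto (fun s => U (s + 1)) atTop (nhds Ustar) :=
      htend.comp (tendsto_add_atTop_nat 1)
    have h3 : (fun s => U (s + 1)) = fun s => F (U s) := funext fun s => hFrec s
    rw [h3] at h2
    exact tendsto_nhds_unique h1 h2
  have hRz : J0inv (R Ustar) = 0 := by
    have : Ustar - J0inv (R Ustar) = Ustar := hfix'
    have := sub_eq_self.mp this
    exact this
  have : R Ustar = 0 := by
    have h1 : (J U0) (J0inv (R Ustar)) = R Ustar := by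
      have := congrArg (fun T => T (R Ustar)) hright
      simpa using this
    rw [hRz] at h1
    simpa using h1.symm
  exact ⟨Ustar, hUstar_ball, htend, this⟩
end

section
/- Let κ : [0,∞) → ℝ and c₁ > 0 be such that the function f(t) = κ(t)·t is strongly monotone with constant c₁ on [0,∞), i.e., (f(t) − f(s))·(t − s) ≥ c₁·(t − s)² for all t, s ≥ 0. Then the function f_abs : ℝ → ℝ defined by f_abs(t) = κ(|t|)·t is strongly monotone with the same constant c₁ on all of ℝ, i.e., (f_abs(t) − f_abs(s))·(t − s) ≥ c₁·(t − s)² for all t, s ∈ ℝ. -/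
/-!
The function `t ↦ κ |t| * t` is odd and agrees with `f t = κ t * t` on `[0, ∞)`. For an odd
function, strong monotonicity on `[0, ∞)` transfers to `(-∞, 0]` by reflection, and for `s ≤ 0 ≤ t`
it follows from the one-sided bounds `f u ≥ c₁ u` (`u ≥ 0`), obtained by comparing `u` with `0`.
-/

open Set

def StronglyMonotoneOn (c : ℝ) (g : ℝ → ℝ) (S : Set ℝ) : Prop :=
  ∀ t ∈ S, ∀ s ∈ S, c * (t - s) ^ 2 ≤ (g t - g s) * (t - s)

namespace StronglyMonotoneOn

variable {c : ℝ} {g : ℝ → ℝ}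

theorem mul_le_of_map_zero (hg : StronglyMonotoneOn c g (Ici 0)) (h0 : g 0 = 0) {u : ℝ}
    (hu : 0 ≤ u) : c * u ≤ g u := by
  rcases hu.eq_or_lt with rfl | hu
  · simp [h0]
  · have h := hg u hu.le 0 self_mem_Ici
    rw [h0, sub_zero, sub_zero, sq, ← mul_assoc] at h
    exact le_of_mul_le_mul_right h hu

theorem univ_of_odd (hg : StronglyMonotoneOn c g (Ici 0)) (hodd : ∀ t, g (-t) = -g t) :
    StronglyMonotoneOn c g univ := by
  have h0 : g 0 = 0 := by linarith [neg_zero (G := ℝ) ▸ hodd 0]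
  intro t _ s _
  wlog hst : s ≤ t generalizing t s
  · nlinarith [this s trivial t trivial (le_of_not_ge hst)]
  rcases le_total 0 s with hs | hs
  · exact hg t (hs.trans hst) s hs
  rcases le_total t 0 with ht | ht
  · have h := hg (-s) (neg_nonneg.2 hs) (-t) (neg_nonneg.2 ht)
    rw [hodd, hodd] at h
    nlinarith [h]
  · have hgt := hg.mul_le_of_map_zero h0 ht
    have hgs := hg.mul_le_of_map_zero h0 (neg_nonneg.2 hs)
    rw [hodd] at hgs
    calc c * (t - s) ^ 2 = (c * t - c * s) * (t - s) := by ring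
      _ ≤ (g t - g s) * (t - s) := by gcongr; linarith

end StronglyMonotoneOn

theorem strongMonotone_abs_extension_general (κ : ℝ → ℝ) (c₁ : ℝ)
    (hmono : ∀ t s : ℝ, 0 ≤ t → 0 ≤ s → (κ t * t - κ s * s) * (t - s) ≥ c₁ * (t - s) ^ 2) :
    ∀ t s : ℝ, (κ |t| * t - κ |s| * s) * (t - s) ≥ c₁ * (t - s) ^ 2 := by
  have hnonneg : StronglyMonotoneOn c₁ (fun t ↦ κ |t| * t) (Ici 0) := by
    intro t (ht : 0 ≤ t) s (hs : 0 ≤ s)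
    simp only [abs_of_nonneg ht, abs_of_nonneg hs]
    exact hmono t s ht hs
  have hodd : ∀ t, κ |-t| * -t = -(κ |t| * t) := fun t ↦ by rw [abs_neg, mul_neg]
  intro t s
  exact hnonneg.univ_of_odd hodd t trivial s trivial

/-- If `f t = κ t * t` is strongly monotone with constant `c₁` on `[0,∞)`,
then `f_abs t = κ |t| * t` is strongly monotone with the same constant `c₁` on all of `ℝ`. -/
theorem strongMonotone_abs_extension (κ : ℝ → ℝ) (c₁ : ℝ) (hc₁ : 0 < c₁)
    (hmono : ∀ t s : ℝ, 0 ≤ t → 0 ≤ s → (κ t * t - κ s * s) * (t - s) ≥ c₁ * (t - s) ^ 2) :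
    ∀ t s : ℝ, (κ |t| * t - κ |s| * s) * (t - s) ≥ c₁ * (t - s) ^ 2 :=
  strongMonotone_abs_extension_general κ c₁ hmono
end

section
/- Let κ : ℝ → ℝ be differentiable and let c₁ > 0, κ₂ ≥ 0, L₁ ≥ 0 be such that: κ(t) ≥ c₁ for all t ≥ 0; the function f(t) = κ(t)·t is strongly monotone with constant c₁ on [0,∞), i.e., (f(t) − f(s))·(t − s) ≥ c₁·(t − s)² for all t, s ≥ 0; |κ′(t)| ≤ κ₂ for all t ≥ 0; and the function g(t) = κ′(t)·t satisfies |g(t) − g(s)| ≤ L₁·|t − s| for all t, s ≥ 0. Define κ_d(x) := κ′(|x|)·|x| + κ(|x|) and L₂ := κ₂ + L₁. Let N ≥ 2, c ≥ 0, b ∈ ℝ^N and z ∈ ℝ, let P be the N×N cyclic shift permutation matrix with entries P_{n,k} = 1 if k ≡ n − 1 (mod N) and 0 otherwise, and for U ∈ ℝ^N define the N×N matrix J(U) := diag(c + κ_d(U_n − b_n))_{n=0,…,N−1} − c·P. Set U⁰ := (z + b_0, …, z + b_{N−1}). Then J(U⁰) is invertible and for every U ∈ ℝ^N the affine covariant Lipschitz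 condition ‖J(U⁰)⁻¹·(J(U) − J(U⁰))‖₂ ≤ (L₂/c₁)·‖U − U⁰‖₂ holds, where ‖·‖₂ denotes the spectral norm of a matrix and the Euclidean norm of a vector. -/
/-!
`κ_d(x) = f'(|x|)` for `f(t) = κ(t)·t`, and strong monotonicity of `f` gives `f' ≥ c₁` on
`[0, ∞)`; so the Jacobian at `U⁰`, `J(U⁰) = (c + κ_d(z))·I − c·P`, satisfies
`‖J(U⁰)x‖ ≥ (c + κ_d(z))‖x‖ − c‖Px‖ ≥ c₁‖x‖`, because `P` permutes coordinates and is an isometry.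
Hence `J(U⁰)` is invertible with `‖J(U⁰)⁻¹‖ ≤ 1/c₁`. The difference `J(U) − J(U⁰)` is diagonal
with entries `κ_d(U_n − b_n) − κ_d(z)`, and `κ_d` is `(κ₂ + L₁)`-Lipschitz (`κ` is `κ₂`-Lipschitz
on `[0, ∞)` by the mean value theorem, `t ↦ κ'(t)·t` is `L₁`-Lipschitz, and `|·|` is
`1`-Lipschitz), so its spectral norm is at most `L₂‖U − U⁰‖`.
-/

open Matrix

/-- The real `N×N` cyclic shift permutation matrix: `P n k = 1` if `k ≡ n − 1 (mod N)`,
else `0`. -/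
def cyclicShiftMatrixR (N : ℕ) : Matrix (Fin N) (Fin N) ℝ :=
  Matrix.of fun n k => if ((k : ℕ) : ZMod N) = ((n : ℕ) : ZMod N) - 1 then 1 else 0

theorem le_of_hasDerivAt_of_strongMonoOn_Ici {f : ℝ → ℝ} {f' a c t : ℝ}
    (hf : HasDerivAt f f' t) (ht : a ≤ t)
    (hmono : ∀ t s, a ≤ t → a ≤ s → c * (t - s) ^ 2 ≤ (f t - f s) * (t - s)) : c ≤ f' := by
  have hg : MonotoneOn (fun s => f s - c * s) (Set.Ici a) := by
    intro u hu v hv huv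
    rcases huv.eq_or_lt with rfl | hlt
    · rfl
    nlinarith [hmono v u hv hu, sub_pos.mpr hlt]
  have hacc : AccPt t (Filter.principal (Set.Ici a)) := by
    rw [accPt_principal_iff_nhdsWithin]
    exact (nhdsGT_neBot t).mono
      (nhdsWithin_mono t fun s (hs : t < s) => ⟨ht.trans hs.le, hs.ne'⟩)
  have := (hf.sub ((hasDerivAt_id t).const_mul c)).hasDerivWithinAt.nonneg_of_monotoneOn hacc hg
  linarith

theorem abs_sub_le_of_abs_deriv_le_of_nonneg {κ : ℝ → ℝ} {κ₂ : ℝ} (hκ : Differentiable ℝ κ)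
    (hbd : ∀ t, 0 ≤ t → |deriv κ t| ≤ κ₂) {p q : ℝ} (hp : 0 ≤ p) (hq : 0 ≤ q) :
    |κ p - κ q| ≤ κ₂ * |p - q| := by
  simpa only [Real.norm_eq_abs] using
    (convex_Ici 0).norm_image_sub_le_of_norm_deriv_le (fun t _ => hκ t)
      (fun t ht => by simpa only [Real.norm_eq_abs] using hbd t ht) hq hp

theorem abs_deriv_mul_abs_add_sub_le {κ : ℝ → ℝ} {κ₂ L₁ : ℝ} (hκ : Differentiable ℝ κ)
    (hκ₂ : 0 ≤ κ₂) (hL₁ : 0 ≤ L₁) (hbd : ∀ t, 0 ≤ t → |deriv κ t| ≤ κ₂)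
    (hg : ∀ t s, 0 ≤ t → 0 ≤ s → |deriv κ t * t - deriv κ s * s| ≤ L₁ * |t - s|) (x y : ℝ) :
    |deriv κ |x| * |x| + κ |x| - (deriv κ |y| * |y| + κ |y|)| ≤ (κ₂ + L₁) * |x - y| := by
  obtain ⟨p, hp, hp0⟩ : ∃ p, p = |x| ∧ 0 ≤ p := ⟨_, rfl, abs_nonneg x⟩
  obtain ⟨q, hq, hq0⟩ : ∃ q, q = |y| ∧ 0 ≤ q := ⟨_, rfl, abs_nonneg y⟩
  have hpq : |p - q| ≤ |x - y| := hp ▸ hq ▸ abs_abs_sub_abs_le_abs_sub x y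
  rw [← hp, ← hq]
  calc |deriv κ p * p + κ p - (deriv κ q * q + κ q)|
      = |(deriv κ p * p - deriv κ q * q) + (κ p - κ q)| := by ring_nf
    _ ≤ L₁ * |p - q| + κ₂ * |p - q| :=
        (abs_add_le _ _).trans <| add_le_add (hg p q hp0 hq0)
          (abs_sub_le_of_abs_deriv_le_of_nonneg hκ hbd hp0 hq0)
    _ ≤ (κ₂ + L₁) * |x - y| := by nlinarith

section EuclideanOperator

variable {n : Type*} [Fintype n] [DecidableEq n]

open scoped Matrix.Norms.L2Operator in
theorem norm_toEuclideanCLM_diagonal_le {v : n → ℝ} {M : ℝ} (hM : 0 ≤ M)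
    (hv : ∀ i, |v i| ≤ M) : ‖toEuclideanCLM (𝕜 := ℝ) (diagonal v)‖ ≤ M := by
  rw [l2_opNorm_toEuclideanCLM, l2_opNorm_diagonal]
  exact (pi_norm_le_iff_of_nonneg hM).mpr hv

theorem isUnit_of_mul_norm_le_norm_toEuclideanCLM {A : Matrix n n ℝ} {m : ℝ} (hm : 0 < m)
    (hA : ∀ x, m * ‖x‖ ≤ ‖toEuclideanCLM (𝕜 := ℝ) A x‖) : IsUnit A := by
  rw [← mulVec_injective_iff_isUnit]
  intro x y hxy
  have h := hA (WithLp.toLp 2 (x - y))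
  rw [toEuclideanCLM_toLp, mulVec_sub, hxy, sub_self, WithLp.toLp_zero, norm_zero] at h
  have h0 : ‖WithLp.toLp 2 (x - y)‖ ≤ 0 := nonpos_of_mul_nonpos_right h hm
  simpa [sub_eq_zero] using h0

theorem norm_toEuclideanCLM_inv_mul_le {A : Matrix n n ℝ} {m : ℝ} (hm : 0 < m)
    (hA : ∀ x, m * ‖x‖ ≤ ‖toEuclideanCLM (𝕜 := ℝ) A x‖) (B : Matrix n n ℝ) :
    ‖toEuclideanCLM (𝕜 := ℝ) (A⁻¹ * B)‖ ≤ ‖toEuclideanCLM (𝕜 := ℝ) B‖ / m := by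
  have hinv : ‖toEuclideanCLM (𝕜 := ℝ) A⁻¹‖ ≤ m⁻¹ := by
    refine ContinuousLinearMap.opNorm_le_bound _ (by positivity) fun y => ?_
    have hdet := (isUnit_of_mul_norm_le_norm_toEuclideanCLM hm hA).map detMonoidHom
    have hy : toEuclideanCLM (𝕜 := ℝ) A (toEuclideanCLM (𝕜 := ℝ) A⁻¹ y) = y := by
      ext i; simp [mulVec_mulVec, mul_nonsing_inv _ hdet]
    have h := hA (toEuclideanCLM (𝕜 := ℝ) A⁻¹ y)
    rw [hy] at h
    rwa [inv_mul_eq_div, le_div_iff₀' hm]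
  calc ‖toEuclideanCLM (𝕜 := ℝ) (A⁻¹ * B)‖
      ≤ ‖toEuclideanCLM (𝕜 := ℝ) A⁻¹‖ * ‖toEuclideanCLM (𝕜 := ℝ) B‖ := by
        rw [map_mul]; exact ContinuousLinearMap.opNorm_comp_le _ _
    _ ≤ m⁻¹ * ‖toEuclideanCLM (𝕜 := ℝ) B‖ := by gcongr
    _ = ‖toEuclideanCLM (𝕜 := ℝ) B‖ / m := inv_mul_eq_div _ _

theorem mul_norm_le_norm_toEuclideanCLM_diagonal_sub_smul {P : Matrix n n ℝ}
    (hP : ∀ x, ‖toEuclideanCLM (𝕜 := ℝ) P x‖ = ‖x‖) {c : ℝ} (hc : 0 ≤ c) (d : ℝ)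
    (x : EuclideanSpace ℝ n) :
    d * ‖x‖ ≤ ‖toEuclideanCLM (𝕜 := ℝ) (diagonal (fun _ => c + d) - c • P) x‖ := by
  have hdiag : toEuclideanCLM (𝕜 := ℝ) (diagonal fun _ => c + d) x = (c + d) • x := by
    ext i; simp [mulVec_diagonal]
  rw [map_sub, map_smul, _root_.sub_apply, _root_.smul_apply, hdiag]
  calc d * ‖x‖ ≤ |c + d| * ‖x‖ - c * ‖x‖ := by
        nlinarith [le_abs_self (c + d), norm_nonneg x]
    _ = ‖(c + d) • x‖ - ‖c • toEuclideanCLM (𝕜 := ℝ) P x‖ := by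
        rw [norm_smul, norm_smul, hP, Real.norm_eq_abs, Real.norm_of_nonneg hc]
    _ ≤ _ := norm_sub_norm_le _ _

end EuclideanOperator

theorem cyclicShiftMatrixR_mulVec {N : ℕ} (x : Fin N → ℝ) :
    cyclicShiftMatrixR N *ᵥ x = fun n => x ((finRotate N).symm n) := by
  cases N with
  | zero => funext n; exact n.elim0
  | succ m =>
    funext n
    have hshift : ∀ k : Fin (m + 1),
        ((k : ℕ) : ZMod (m + 1)) = ((n : ℕ) : ZMod (m + 1)) - 1 ↔
          k = (finRotate (m + 1)).symm n := by
      intro k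
      have hcast : ∀ i : Fin (m + 1), ((i : ℕ) : ZMod (m + 1)) = (i : ZMod (m + 1)) :=
        fun i => ZMod.natCast_zmod_val (n := m + 1) i
      rw [finRotate_symm_apply, hcast, hcast]
      -- `ZMod (m + 1)` unfolds to `Fin (m + 1)`, with the same ring operations
      exact Iff.rfl
    simp [mulVec, dotProduct, cyclicShiftMatrixR, hshift]

theorem norm_toEuclideanCLM_cyclicShiftMatrixR_apply {N : ℕ} (x : EuclideanSpace ℝ (Fin N)) :
    ‖toEuclideanCLM (𝕜 := ℝ) (cyclicShiftMatrixR N) x‖ = ‖x‖ := by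
  have : toEuclideanCLM (𝕜 := ℝ) (cyclicShiftMatrixR N) x =
      LinearIsometryEquiv.piLpCongrLeft 2 ℝ ℝ (finRotate N) x := by
    ext n
    simp [cyclicShiftMatrixR_mulVec, Equiv.piCongrLeft']
  rw [this, LinearIsometryEquiv.norm_map]

theorem affine_covariant_lipschitz_model_general (κ : ℝ → ℝ) (hκdiff : Differentiable ℝ κ)
    (c₁ κ₂ L₁ : ℝ) (hc₁ : 0 < c₁) (hκ₂ : 0 ≤ κ₂) (hL₁ : 0 ≤ L₁)
    (hmono : ∀ t s : ℝ, 0 ≤ t → 0 ≤ s → (κ t * t - κ s * s) * (t - s) ≥ c₁ * (t - s) ^ 2)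
    (hbd : ∀ t : ℝ, 0 ≤ t → |deriv κ t| ≤ κ₂)
    (hg : ∀ t s : ℝ, 0 ≤ t → 0 ≤ s → |deriv κ t * t - deriv κ s * s| ≤ L₁ * |t - s|)
    (κd : ℝ → ℝ) (hκd : ∀ x : ℝ, κd x = deriv κ |x| * |x| + κ |x|)
    (L₂ : ℝ) (hL₂ : L₂ = κ₂ + L₁)
    (N : ℕ) (c : ℝ) (hc : 0 ≤ c)
    (b : Fin N → ℝ) (z : ℝ)
    (J : EuclideanSpace ℝ (Fin N) → Matrix (Fin N) (Fin N) ℝ)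
    (hJ : ∀ U : EuclideanSpace ℝ (Fin N),
      J U = Matrix.diagonal (fun n => c + κd (U n - b n)) - c • cyclicShiftMatrixR N)
    (U0 : EuclideanSpace ℝ (Fin N)) (hU0 : ∀ n : Fin N, U0 n = z + b n) :
    IsUnit (J U0) ∧
      ∀ U : EuclideanSpace ℝ (Fin N),
        ‖Matrix.toEuclideanCLM (𝕜 := ℝ) ((J U0)⁻¹ * (J U - J U0))‖ ≤
          L₂ / c₁ * ‖U - U0‖ := by
  have hκdz : c₁ ≤ κd z := hκd z ▸ le_of_hasDerivAt_of_strongMonoOn_Ici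
    (((hκdiff |z|).hasDerivAt.mul (hasDerivAt_id _)).congr_deriv (by simp)) (abs_nonneg z) hmono
  have hJU0 : J U0 = diagonal (fun _ => c + κd z) - c • cyclicShiftMatrixR N := by
    simp only [hJ, hU0, add_sub_cancel_right]
  have hbelow : ∀ x, c₁ * ‖x‖ ≤ ‖toEuclideanCLM (𝕜 := ℝ) (J U0) x‖ := fun x =>
    (mul_le_mul_of_nonneg_right hκdz (norm_nonneg x)).trans <| hJU0 ▸
      mul_norm_le_norm_toEuclideanCLM_diagonal_sub_smul
        norm_toEuclideanCLM_cyclicShiftMatrixR_apply hc (κd z) x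
  refine ⟨isUnit_of_mul_norm_le_norm_toEuclideanCLM hc₁ hbelow, fun U => ?_⟩
  have hdiff : J U - J U0 = diagonal fun n => κd (U n - b n) - κd z := by
    rw [hJ U, hJU0, sub_sub_sub_cancel_right, diagonal_sub]
    simp only [add_sub_add_left_eq_sub]
  have hL₂0 : 0 ≤ L₂ := hL₂ ▸ add_nonneg hκ₂ hL₁
  have hentry : ∀ n, |κd (U n - b n) - κd z| ≤ L₂ * ‖U - U0‖ := fun n => calc
    |κd (U n - b n) - κd z| ≤ L₂ * |U n - b n - z| := by
        rw [hκd, hκd, hL₂]; exact abs_deriv_mul_abs_add_sub_le hκdiff hκ₂ hL₁ hbd hg _ _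
    _ = L₂ * ‖(U - U0) n‖ := by rw [PiLp.sub_apply, hU0, Real.norm_eq_abs, sub_sub, add_comm z]
    _ ≤ L₂ * ‖U - U0‖ := mul_le_mul_of_nonneg_left (PiLp.norm_apply_le _ _) hL₂0
  calc ‖toEuclideanCLM (𝕜 := ℝ) ((J U0)⁻¹ * (J U - J U0))‖
      ≤ ‖toEuclideanCLM (𝕜 := ℝ) (J U - J U0)‖ / c₁ :=
        norm_toEuclideanCLM_inv_mul_le hc₁ hbelow _
    _ ≤ L₂ * ‖U - U0‖ / c₁ := by
        rw [hdiff]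
        gcongr
        exact norm_toEuclideanCLM_diagonal_le (by positivity) hentry
    _ = L₂ / c₁ * ‖U - U0‖ := by ring

/-- affine covariant Lipschitz condition for the 1D model problem.
Under the assumptions on the nonlinearity `κ`, the frozen Jacobian
`J(U⁰) = diag(c + κ_d(z)) − c·P` of the periodic Parareal residual is invertible, and
`‖J(U⁰)⁻¹ (J(U) − J(U⁰))‖₂ ≤ (L₂/c₁)·‖U − U⁰‖₂` holds for every `U ∈ ℝ^N`,
where `L₂ = κ₂ + L₁`. -/
theorem affine_covariant_lipschitz_model (κ : ℝ → ℝ) (hκdiff : Differentiable ℝ κ)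
    (c₁ κ₂ L₁ : ℝ) (hc₁ : 0 < c₁) (hκ₂ : 0 ≤ κ₂) (hL₁ : 0 ≤ L₁)
    (hκlb : ∀ t : ℝ, 0 ≤ t → c₁ ≤ κ t)
    (hmono : ∀ t s : ℝ, 0 ≤ t → 0 ≤ s → (κ t * t - κ s * s) * (t - s) ≥ c₁ * (t - s) ^ 2)
    (hbd : ∀ t : ℝ, 0 ≤ t → |deriv κ t| ≤ κ₂)
    (hg : ∀ t s : ℝ, 0 ≤ t → 0 ≤ s → |deriv κ t * t - deriv κ s * s| ≤ L₁ * |t - s|)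
    (κd : ℝ → ℝ) (hκd : ∀ x : ℝ, κd x = deriv κ |x| * |x| + κ |x|)
    (L₂ : ℝ) (hL₂ : L₂ = κ₂ + L₁)
    (N : ℕ) (hN : 2 ≤ N) (c : ℝ) (hc : 0 ≤ c)
    (b : Fin N → ℝ) (z : ℝ)
    (J : EuclideanSpace ℝ (Fin N) → Matrix (Fin N) (Fin N) ℝ)
    (hJ : ∀ U : EuclideanSpace ℝ (Fin N),
      J U = Matrix.diagonal (fun n => c + κd (U n - b n)) - c • cyclicShiftMatrixR N)
    (U0 : EuclideanSpace ℝ (Fin N)) (hU0 : ∀ n : Fin N, U0 n = z + b n) :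
    IsUnit (J U0) ∧
      ∀ U : EuclideanSpace ℝ (Fin N),
        ‖Matrix.toEuclideanCLM (𝕜 := ℝ) ((J U0)⁻¹ * (J U - J U0))‖ ≤
          L₂ / c₁ * ‖U - U0‖ :=
  affine_covariant_lipschitz_model_general κ hκdiff c₁ κ₂ L₁ hc₁ hκ₂ hL₁ hmono hbd hg κd hκd L₂ hL₂
    N c hc b z J hJ U0 hU0
end

section
/- Let κ : ℝ → ℝ be continuously differentiable and let c₁ > 0, κ₂ ≥ 0, L₁ ≥ 0 be such that: κ(t) ≥ c₁ for all t ≥ 0; the function f(t) = κ(t)·t is strongly monotone with constant c₁ on [0,∞), i.e., (f(t) − f(s))·(t − s) ≥ c₁·(t − s)² for all t, s ≥ 0; |κ′(t)| ≤ κ₂ for all t ≥ 0; and the function g(t) = κ′(t)·t satisfies |g(t) − g(s)| ≤ L₁·|t − s| for all t, s ≥ 0. Define κ_d(x) := κ′(|x|)·|x| + κ(|x|) and L₂ := κ₂ + L₁, and assume L₂ > 0. Let N ≥ 2, c ≥ 0, b, j ∈ ℝ^N, z ∈ ℝ, let P be the N×N cyclic shift permutation matrix with entries P_{n,k} = 1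 if k ≡ n − 1 (mod N) and 0 otherwise, and define R : ℝ^N → ℝ^N componentwise by R(U)_n = (c + κ(|U_n − b_n|))·(U_n − b_n) − c·U_{(n−1) mod N} − j_n. Set G_d := diag(c + κ_d(z))·I − c·P (an N×N matrix), U⁰ := (z + b_0, …, z + b_{N−1}), and define the simplified Newton iterates U^{s+1} = U^s − G_d⁻¹·R(U^s) for s = 0, 1, 2, …. If h₀ := (L₂/c₁)·‖U¹ − U⁰‖₂ ≤ 1/2, then all iterates U^s remain in the closed Euclidean ball of radius ρ = (1 − √(1 − 2h₀))·c₁/L₂ centered at U⁰, and the sequence (U^s) converges to some U* in this ball with R(U*) = 0. -/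
open Matrix Metric Filter

section Aux

open Set

lemma quad_taylor (φ φd : ℝ → ℝ) (hd : ∀ x, HasDerivAt φ (φd x) x) (L : ℝ)
    (hlip : ∀ x y, |φd x - φd y| ≤ L * |x - y|) (w v : ℝ) :
    |φ v - φ w - φd w * (v - w)| ≤ L / 2 * (v - w) ^ 2 := by
  set d := v - w with hdd
  set f : ℝ → ℝ := fun τ => φ (w + τ * d) - φ w - φd w * (τ * d) with hf
  set f' : ℝ → ℝ := fun τ => (φd (w + τ * d) - φd w) * d with hf'
  have hderiv : ∀ τ : ℝ, HasDerivAt f (f' τ) τ := by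
    intro τ
    have h1 : HasDerivAt (fun τ : ℝ => w + τ * d) d τ := by
      simpa using ((hasDerivAt_id τ).mul_const d).const_add w
    have h2 : HasDerivAt (fun τ => φ (w + τ * d)) (φd (w + τ * d) * d) τ :=
      (hd _).comp τ h1
    have h3 : HasDerivAt (fun τ : ℝ => φd w * (τ * d)) (φd w * d) τ := by
      simpa using ((hasDerivAt_id τ).mul_const d).const_mul (φd w)
    have := (h2.sub_const (φ w)).sub h3
    have e : f' τ = φd (w + τ * d) * d - φd w * d := by simp only [f']; ring
    rw [e]; exact this
  have hB : ∀ x : ℝ, HasDerivAt (fun τ : ℝ => L / 2 * τ ^ 2 * d ^ 2) (L * x * d ^ 2) x := by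
    intro x
    have := ((hasDerivAt_pow 2 x).const_mul (L / 2)).mul_const (d ^ 2)
    refine this.congr_deriv ?_
    rw [show (2:ℕ) - 1 = 1 from rfl]
    push_cast
    ring
  have bound : ∀ x ∈ Ico (0:ℝ) 1, ‖f' x‖ ≤ L * x * d ^ 2 := by
    intro x hx
    have h1 : |φd (w + x * d) - φd w| ≤ L * |x * d| := by
      have := hlip (w + x * d) w
      simpa using this
    have : ‖f' x‖ = |φd (w + x * d) - φd w| * |d| := by
      rw [hf']; simp [abs_mul]
    rw [this]
    calc |φd (w + x * d) - φd w| * |d| ≤ (L * |x * d|) * |d| := by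
          apply mul_le_mul_of_nonneg_right h1 (abs_nonneg d)
      _ = L * x * d ^ 2 := by
          rw [abs_mul, abs_of_nonneg hx.1]
          rw [mul_assoc, mul_assoc, mul_assoc, ← sq_abs]
          ring
  have key := image_norm_le_of_norm_deriv_right_le_deriv_boundary
    (f := f) (f' := f') (a := 0) (b := 1)
    (fun x _ => (hderiv x).continuousAt.continuousWithinAt)
    (fun x _ => (hderiv x).hasDerivWithinAt)
    (by simp [f] : ‖f 0‖ ≤ L / 2 * (0:ℝ) ^ 2 * d ^ 2)
    hB bound
  have h1 := key (x := 1) (by norm_num)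
  have hfv : f 1 = φ v - φ w - φd w * d := by simp [f, hdd]
  rw [hfv] at h1
  simpa using h1

lemma hasDerivAt_abs_mul (κ : ℝ → ℝ) (hκ : ContDiff ℝ 1 κ) (x : ℝ) :
    HasDerivAt (fun y => κ |y| * y) (deriv κ |x| * |x| + κ |x|) x := by
  have hdiff : Differentiable ℝ κ := hκ.differentiable one_ne_zero
  rcases lt_trichotomy x 0 with hx | hx | hx
  · have h0 : HasDerivAt (fun y : ℝ => κ (-y)) (deriv κ (-x) * (-1)) x :=
      (hdiff (-x)).hasDerivAt.comp x (hasDerivAt_neg x)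
    have h1 : HasDerivAt (fun y : ℝ => κ (-y) * y)
        ((deriv κ (-x) * (-1)) * x + κ (-x) * 1) x := h0.mul (hasDerivAt_id x)
    have heq : (fun y : ℝ => κ |y| * y) =ᶠ[nhds x] fun y => κ (-y) * y := by
      filter_upwards [eventually_lt_nhds hx] with y hy
      rw [abs_of_neg hy]
    have h2 := h1.congr_of_eventuallyEq heq
    have : deriv κ |x| * |x| + κ |x| = (deriv κ (-x) * (-1)) * x + κ (-x) * 1 := by
      rw [abs_of_neg hx]; ring
    rwa [this]
  · subst hx
    rw [hasDerivAt_iff_tendsto_slope]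
    have htend : Tendsto (fun y : ℝ => κ |y|) (nhdsWithin 0 {(0:ℝ)}ᶜ) (nhds (κ 0)) := by
      have : Tendsto (fun y : ℝ => κ |y|) (nhds 0) (nhds (κ 0)) := by
        have := (hκ.continuous.comp continuous_abs).tendsto 0
        simpa [Function.comp_def] using this
      exact this.mono_left nhdsWithin_le_nhds
    have heq : ∀ y ∈ ({(0:ℝ)}ᶜ : Set ℝ), κ |y| = slope (fun y => κ |y| * y) 0 y := by
      intro y hy
      have hy0 : y ≠ 0 := hy
      rw [slope_def_field]
      field_simp
      simp
    have : Tendsto (slope (fun y => κ |y| * y) 0) (nhdsWithin 0 {(0:ℝ)}ᶜ) (nhds (κ 0)) := by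
      refine htend.congr' ?_
      filter_upwards [self_mem_nhdsWithin] with y hy using heq y hy
    simpa using this
  · have h1 : HasDerivAt (fun y : ℝ => κ y * y) (deriv κ x * x + κ x * 1) x :=
      (hdiff x).hasDerivAt.mul (hasDerivAt_id x)
    have heq : (fun y : ℝ => κ |y| * y) =ᶠ[nhds x] fun y => κ y * y := by
      filter_upwards [eventually_gt_nhds hx] with y hy
      rw [abs_of_pos hy]
    have h2 := h1.congr_of_eventuallyEq heq
    have : deriv κ |x| * |x| + κ |x| = deriv κ x * x + κ x * 1 := by
      rw [abs_of_pos hx]; ring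
    rwa [this]

lemma kd_lower_bound (κ : ℝ → ℝ) (hκ : ContDiff ℝ 1 κ) (c₁ : ℝ)
    (hκlb : ∀ t : ℝ, 0 ≤ t → c₁ ≤ κ t)
    (hmono : ∀ t s : ℝ, 0 ≤ t → 0 ≤ s → (κ t * t - κ s * s) * (t - s) ≥ c₁ * (t - s) ^ 2)
    (t : ℝ) (ht : 0 ≤ t) : c₁ ≤ deriv κ t * t + κ t := by
  rcases eq_or_lt_of_le ht with h0 | hpos
  · rw [← h0]; simpa using hκlb 0 le_rfl
  · have hder : HasDerivAt (fun s => κ s * s) (deriv κ t * t + κ t * 1) t :=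
      ((hκ.differentiable one_ne_zero) t).hasDerivAt.mul (hasDerivAt_id t)
    have hslope := hasDerivAt_iff_tendsto_slope.mp hder
    have hev : ∀ᶠ s in nhdsWithin t {t}ᶜ, c₁ ≤ slope (fun s => κ s * s) t s := by
      have hpos' : ∀ᶠ s in nhdsWithin t {t}ᶜ, 0 < s :=
        eventually_nhdsWithin_of_eventually_nhds (eventually_gt_nhds hpos)
      filter_upwards [hpos', self_mem_nhdsWithin] with s hs hs'
      have hst : s - t ≠ 0 := sub_ne_zero.mpr hs'
      rw [slope_def_field]
      have hm := hmono s t hs.le ht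
      have h2 : (0:ℝ) < (s - t) ^ 2 := by positivity
      rcases lt_or_gt_of_ne hst with hneg | hposd
      · rw [le_div_iff_of_neg hneg]
        nlinarith [hm]
      · rw [le_div_iff₀ hposd]
        nlinarith [hm]
    have := ge_of_tendsto hslope hev
    linarith [this]

lemma fin_sub_one_val {N : ℕ} [NeZero N] (hN : 2 ≤ N) (n : Fin N) :
    ((n - 1 : Fin N) : ℕ) = ((n : ℕ) + (N - 1)) % N := by
  have h1 : ((1 : Fin N) : ℕ) = 1 := by
    rw [Fin.val_one']
    exact Nat.mod_eq_of_lt hN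
  rw [Fin.sub_def, h1]
  simp [Nat.add_comm]

lemma cond_iff {N : ℕ} [NeZero N] (hN : 2 ≤ N) (n k : Fin N) :
    (((k : ℕ) : ZMod N) = ((n : ℕ) : ZMod N) - 1) ↔ k = n - 1 := by
  constructor
  · intro h
    have h' : ((k : ℕ) : ZMod N) + 1 = ((n : ℕ) : ZMod N) := by rw [h]; ring
    have h'' : (((k : ℕ) + 1 : ℕ) : ZMod N) = ((n : ℕ) : ZMod N) := by push_cast; exact h'
    rw [ZMod.natCast_eq_natCast_iff'] at h''
    rw [Nat.mod_eq_of_lt n.isLt] at h''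
    apply Fin.ext
    rw [fin_sub_one_val hN]
    rcases Nat.lt_or_ge ((k : ℕ) + 1) N with hlt | hge
    · rw [Nat.mod_eq_of_lt hlt] at h''
      rw [← h'']
      have : (k:ℕ) + 1 + (N - 1) = (k:ℕ) + N := by omega
      rw [this, Nat.add_mod_right, Nat.mod_eq_of_lt k.isLt]
    · have hk : (k : ℕ) + 1 = N := by have := k.isLt; omega
      rw [hk, Nat.mod_self] at h''
      rw [← h'']
      have : (0:ℕ) + (N - 1) = N - 1 := by omega
      rw [this, Nat.mod_eq_of_lt (by omega)]
      omega
  · intro h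
    rw [h]
    have hcast : ((((n - 1 : Fin N) : ℕ)) : ZMod N) = (((n : ℕ) + (N - 1) : ℕ)) := by
      rw [fin_sub_one_val hN, ZMod.natCast_mod]
    rw [hcast]
    have hN1 : ((N - 1 : ℕ) : ZMod N) = ((N : ℕ) : ZMod N) - 1 := by
      have h1 : (1:ℕ) ≤ N := by omega
      push_cast [Nat.cast_sub h1]
      ring
    push_cast
    rw [hN1, ZMod.natCast_self]
    ring

lemma shift_mulVec {N : ℕ} [NeZero N] (hN : 2 ≤ N) (x : Fin N → ℝ) (n : Fin N) :
    (cyclicShiftMatrixR N).mulVec x n = x (n - 1) := by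
  rw [Matrix.mulVec, dotProduct]
  have : ∀ k, cyclicShiftMatrixR N n k * x k = if k = n - 1 then x k else 0 := by
    intro k
    rw [cyclicShiftMatrixR]
    simp only [Matrix.of_apply]
    by_cases h : k = n - 1
    · rw [if_pos ((cond_iff hN n k).mpr h), if_pos h, one_mul]
    · rw [if_neg (fun hc => h ((cond_iff hN n k).mp hc)), if_neg h, zero_mul]
  simp_rw [this]
  rw [Finset.sum_ite_eq' Finset.univ (n-1) x]
  simp

lemma Gd_mulVec {N : ℕ} [NeZero N] (hN : 2 ≤ N) (a c : ℝ)
    (x : Fin N → ℝ) (n : Fin N) :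
    ((a • (1 : Matrix (Fin N) (Fin N) ℝ) - c • cyclicShiftMatrixR N)).mulVec x n
      = a * x n - c * x (n - 1) := by
  rw [Matrix.sub_mulVec]
  simp only [Pi.sub_apply]
  rw [Matrix.smul_mulVec, Matrix.smul_mulVec, Matrix.one_mulVec]
  simp [shift_mulVec hN x n]

lemma coord_le_norm {N : ℕ} (x : EuclideanSpace ℝ (Fin N)) (n : Fin N) : |x n| ≤ ‖x‖ := by
  rw [EuclideanSpace.norm_eq]
  have h1 : |x n| = Real.sqrt (|x n| ^ 2) := by rw [Real.sqrt_sq (abs_nonneg _)]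
  rw [h1]
  apply Real.sqrt_le_sqrt
  have : |x n| ^ 2 = ‖x n‖ ^ 2 := by rw [Real.norm_eq_abs]
  rw [this]
  exact Finset.single_le_sum (f := fun i => ‖x i‖ ^ 2) (fun i _ => by positivity)
    (Finset.mem_univ n)

lemma norm_le_of_coord {N : ℕ} (x y : EuclideanSpace ℝ (Fin N)) (K : ℝ) (hK : 0 ≤ K)
    (h : ∀ n, |x n| ≤ K * |y n|) : ‖x‖ ≤ K * ‖y‖ := by
  rw [EuclideanSpace.norm_eq, EuclideanSpace.norm_eq]
  have h2 : K * Real.sqrt (∑ i, ‖y i‖ ^ 2) = Real.sqrt (∑ i, (K * ‖y i‖) ^ 2) := by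
    have hsum : ∑ i, (K * ‖y i‖) ^ 2 = K ^ 2 * ∑ i, ‖y i‖ ^ 2 := by
      rw [Finset.mul_sum]
      apply Finset.sum_congr rfl
      intro i _
      ring
    rw [hsum, Real.sqrt_mul (sq_nonneg K), Real.sqrt_sq hK]
  rw [h2]
  apply Real.sqrt_le_sqrt
  apply Finset.sum_le_sum
  intro i _
  have := h i
  rw [Real.norm_eq_abs, Real.norm_eq_abs]
  have h0 : 0 ≤ K * |y i| := by positivity
  nlinarith [abs_nonneg (x i)]

lemma shift_norm {N : ℕ} [NeZero N] (x : EuclideanSpace ℝ (Fin N))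
    (y : EuclideanSpace ℝ (Fin N)) (hy : ∀ n, y n = x (n - 1)) : ‖y‖ = ‖x‖ := by
  rw [EuclideanSpace.norm_eq, EuclideanSpace.norm_eq]
  congr 1
  rw [← Equiv.sum_comp (Equiv.subRight (1 : Fin N)) (fun m => ‖x m‖ ^ 2)]
  apply Finset.sum_congr rfl
  intro n _
  rw [hy n]
  rfl

/-- Majorant sequence for the simplified Newton method. -/
noncomputable def majSeq (w a : ℝ) : ℕ → ℝ
  | 0 => 0
  | (s + 1) => w / 2 * (majSeq w a s) ^ 2 + a

lemma majSeq_zero (w a : ℝ) : majSeq w a 0 = 0 := rfl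

lemma majSeq_succ (w a : ℝ) (s : ℕ) :
    majSeq w a (s + 1) = w / 2 * (majSeq w a s) ^ 2 + a := rfl

end Aux

set_option maxHeartbeats 1000000 in
/-- convergence of the simplified Newton method for the 1D model problem.
Under the assumptions on the nonlinearity `κ`, with the residual
`R(U)_n = (c + κ(|U_n − b_n|))(U_n − b_n) − c·U_{(n−1) mod N} − j_n`, the frozen Jacobian
`G_d = (c + κ_d(z))·I − c·P`, starting point `U⁰ = (z + b_n)_n`, and simplified Newton iterates
`U^{s+1} = U^s − G_d⁻¹ R(U^s)`, if `h₀ = (L₂/c₁)·‖U¹ − U⁰‖ ≤ 1/2` then all iterates remain in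
the closed ball of radius `ρ = (1 − √(1 − 2h₀))·c₁/L₂` around `U⁰` and converge to a root of
`R` in this ball. -/
theorem simplified_newton_convergence_model (κ : ℝ → ℝ) (hκdiff : ContDiff ℝ 1 κ)
    (c₁ κ₂ L₁ : ℝ) (hc₁ : 0 < c₁) (hκ₂ : 0 ≤ κ₂) (hL₁ : 0 ≤ L₁)
    (hκlb : ∀ t : ℝ, 0 ≤ t → c₁ ≤ κ t)
    (hmono : ∀ t s : ℝ, 0 ≤ t → 0 ≤ s → (κ t * t - κ s * s) * (t - s) ≥ c₁ * (t - s) ^ 2)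
    (hbd : ∀ t : ℝ, 0 ≤ t → |deriv κ t| ≤ κ₂)
    (hgLip : ∀ t s : ℝ, 0 ≤ t → 0 ≤ s → |deriv κ t * t - deriv κ s * s| ≤ L₁ * |t - s|)
    (κd : ℝ → ℝ) (hκd : ∀ x : ℝ, κd x = deriv κ |x| * |x| + κ |x|)
    (L₂ : ℝ) (hL₂ : L₂ = κ₂ + L₁) (hL₂pos : 0 < L₂)
    (N : ℕ) [NeZero N] (hN : 2 ≤ N) (c : ℝ) (hc : 0 ≤ c)
    (b j : Fin N → ℝ) (z : ℝ)
    (R : EuclideanSpace ℝ (Fin N) → EuclideanSpace ℝ (Fin N))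
    (hR : ∀ (U : EuclideanSpace ℝ (Fin N)) (n : Fin N),
      R U n = (c + κ |U n - b n|) * (U n - b n) - c * U (n - 1) - j n)
    (Gd : Matrix (Fin N) (Fin N) ℝ)
    (hGd : Gd = (c + κd z) • (1 : Matrix (Fin N) (Fin N) ℝ) - c • cyclicShiftMatrixR N)
    (U : ℕ → EuclideanSpace ℝ (Fin N))
    (hUinit : ∀ n : Fin N, U 0 n = z + b n)
    (hUrec : ∀ s : ℕ, U (s + 1) = U s - Matrix.toEuclideanCLM (𝕜 := ℝ) Gd⁻¹ (R (U s)))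
    (h₀ : ℝ) (hh₀ : h₀ = L₂ / c₁ * ‖U 1 - U 0‖) (hh₀le : h₀ ≤ 1 / 2)
    (ρ : ℝ) (hρ : ρ = (1 - Real.sqrt (1 - 2 * h₀)) * c₁ / L₂) :
    (∀ s : ℕ, U s ∈ closedBall (U 0) ρ) ∧
      ∃ Ustar ∈ closedBall (U 0) ρ, Tendsto U atTop (nhds Ustar) ∧ R Ustar = 0 := by
  classical
  have hdiff : Differentiable ℝ κ := hκdiff.differentiable one_ne_zero
  -- κ is κ₂-Lipschitz on [0, ∞)
  have hκLip : ∀ t s : ℝ, 0 ≤ t → 0 ≤ s → |κ t - κ s| ≤ κ₂ * |t - s| := by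
    intro t s ht hs
    have := Convex.norm_image_sub_le_of_norm_hasDerivWithin_le
      (f := κ) (f' := deriv κ) (s := Set.Ici (0:ℝ)) (C := κ₂)
      (fun x _ => (hdiff x).hasDerivAt.hasDerivWithinAt)
      (fun x hx => by simpa using hbd x hx) (convex_Ici 0) hs ht
    simpa [Real.norm_eq_abs] using this
  -- κd is L₂-Lipschitz
  have hκdLip : ∀ x y : ℝ, |κd x - κd y| ≤ L₂ * |x - y| := by
    intro x y
    rw [hκd, hκd, hL₂]
    have h1 := hgLip |x| |y| (abs_nonneg x) (abs_nonneg y)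
    have h2 := hκLip |x| |y| (abs_nonneg x) (abs_nonneg y)
    have h3 : |(|x| - |y|)| ≤ |x - y| := abs_abs_sub_abs_le_abs_sub x y
    have habs : deriv κ |x| * |x| + κ |x| - (deriv κ |y| * |y| + κ |y|)
        = (deriv κ |x| * |x| - deriv κ |y| * |y|) + (κ |x| - κ |y|) := by ring
    rw [habs]
    refine le_trans (abs_add_le _ _) ?_
    nlinarith [h1, h2, h3, abs_nonneg (x - y), hκ₂, hL₁,
      abs_nonneg ((|x| : ℝ) - |y|)]
  set F : ℝ → ℝ := fun x => κ |x| * x with hF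
  have hFd : ∀ x, HasDerivAt F (κd x) x := by
    intro x
    rw [hκd]
    exact hasDerivAt_abs_mul κ hκdiff x
  have hκdz : c₁ ≤ κd z := by
    rw [hκd]
    exact kd_lower_bound κ hκdiff c₁ hκlb hmono |z| (abs_nonneg z)
  have hquad : ∀ w v : ℝ, |F v - F w - κd w * (v - w)| ≤ L₂ / 2 * (v - w) ^ 2 :=
    quad_taylor F κd hFd L₂ hκdLip
  -- the frozen Jacobian as an operator
  set A := Matrix.toEuclideanCLM (𝕜 := ℝ) Gd with hA
  set B := Matrix.toEuclideanCLM (𝕜 := ℝ) Gd⁻¹ with hB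
  have hAapp : ∀ (x : EuclideanSpace ℝ (Fin N)) (n : Fin N),
      A x n = (c + κd z) * x n - c * x (n - 1) := by
    intro x n
    have h0 : A x n = Gd.mulVec x n := rfl
    rw [h0, hGd]
    exact Gd_mulVec hN (c + κd z) c x n
  have hAlow : ∀ x : EuclideanSpace ℝ (Fin N), κd z * ‖x‖ ≤ ‖A x‖ := by
    intro x
    set y : EuclideanSpace ℝ (Fin N) :=
      (WithLp.equiv 2 (Fin N → ℝ)).symm (fun n => x (n - 1)) with hy
    have hyapp : ∀ n, y n = x (n - 1) := fun n => rfl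
    have hyn : ‖y‖ = ‖x‖ := shift_norm x y hyapp
    have hAx : A x = (c + κd z) • x - c • y := by
      ext n
      rw [hAapp x n]
      have : ((c + κd z) • x - c • y) n = (c + κd z) * x n - c * y n := rfl
      rw [this, hyapp n]
    rw [hAx]
    have h1 : ‖(c + κd z) • x‖ - ‖c • y‖ ≤ ‖(c + κd z) • x - c • y‖ := norm_sub_norm_le _ _
    rw [norm_smul, norm_smul, hyn] at h1
    rw [Real.norm_eq_abs, Real.norm_eq_abs, abs_of_nonneg (by linarith : (0:ℝ) ≤ c + κd z),
      abs_of_nonneg hc] at h1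
    nlinarith [h1]
  -- Gd is invertible
  have hAinj : Function.Injective (Gd.mulVec) := by
    intro x y hxy
    set u : EuclideanSpace ℝ (Fin N) := (WithLp.equiv 2 (Fin N → ℝ)).symm (x - y) with hu
    have hAu : A u = 0 := by
      ext n
      show Gd.mulVec (x - y) n = (0 : EuclideanSpace ℝ (Fin N)) n
      rw [Matrix.mulVec_sub, hxy]
      simp
    have h2 := hAlow u
    rw [hAu, norm_zero] at h2
    have h3 : ‖u‖ = 0 :=
      le_antisymm (by nlinarith [norm_nonneg u]) (norm_nonneg _)
    have h4 : u = 0 := norm_eq_zero.mp h3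
    have h5 : x - y = 0 := by
      have := congrArg (WithLp.equiv 2 (Fin N → ℝ)) h4
      simpa [hu] using this
    exact sub_eq_zero.mp h5
  have hGdunit : IsUnit Gd := Matrix.mulVec_injective_iff_isUnit.mp hAinj
  have hABy : ∀ y : EuclideanSpace ℝ (Fin N), A (B y) = y := by
    intro y
    have h1 : Gd * Gd⁻¹ = 1 :=
      Matrix.mul_nonsing_inv Gd ((Matrix.isUnit_iff_isUnit_det Gd).mp hGdunit)
    have h2 : A * B = 1 := by rw [hA, hB, ← _root_.map_mul, h1, _root_.map_one]
    calc A (B y) = (A * B) y := rfl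
      _ = y := by rw [h2]; rfl
  have hBnorm : ∀ y : EuclideanSpace ℝ (Fin N), ‖B y‖ ≤ c₁⁻¹ * ‖y‖ := by
    intro y
    have h1 := hAlow (B y)
    rw [hABy y] at h1
    have h2 : c₁ * ‖B y‖ ≤ ‖y‖ := by nlinarith [norm_nonneg (B y)]
    calc ‖B y‖ = c₁⁻¹ * (c₁ * ‖B y‖) := by field_simp
      _ ≤ c₁⁻¹ * ‖y‖ := by
          apply mul_le_mul_of_nonneg_left h2 (by positivity)
  -- the key residual estimate
  have hest : ∀ V W : EuclideanSpace ℝ (Fin N),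
      ‖R V - R W - A (V - W)‖ ≤ L₂ * (‖W - U 0‖ + ‖V - W‖ / 2) * ‖V - W‖ := by
    intro V W
    have hKnn : 0 ≤ L₂ * (‖W - U 0‖ + ‖V - W‖ / 2) := by positivity
    have := norm_le_of_coord (R V - R W - A (V - W)) (V - W)
      (L₂ * (‖W - U 0‖ + ‖V - W‖ / 2)) hKnn ?_
    · exact this
    intro n
    have hcomp : (R V - R W - A (V - W)) n
        = F (V n - b n) - F (W n - b n) - κd z * (V n - W n) := by
      have h1 : (R V - R W - A (V - W)) n = R V n - R W n - A (V - W) n := rfl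
      rw [h1, hR V n, hR W n, hAapp (V - W) n]
      have h2 : (V - W) (n - 1) = V (n - 1) - W (n - 1) := rfl
      have h3 : (V - W) n = V n - W n := rfl
      rw [h2, h3]
      simp only [hF]
      ring
    rw [hcomp]
    have hq := hquad (W n - b n) (V n - b n)
    have harg : (V n - b n) - (W n - b n) = V n - W n := by ring
    rw [harg] at hq
    have hl := hκdLip (W n - b n) z
    have hsplit : F (V n - b n) - F (W n - b n) - κd z * (V n - W n)
        = (F (V n - b n) - F (W n - b n) - κd (W n - b n) * (V n - W n))
          + (κd (W n - b n) - κd z) * (V n - W n) := by ring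
    rw [hsplit]
    have hWz : W n - b n - z = W n - U 0 n := by rw [hUinit n]; ring
    rw [hWz] at hl
    have hcoordW : |W n - U 0 n| ≤ ‖W - U 0‖ := by
      have h := coord_le_norm (W - U 0) n
      have : (W - U 0) n = W n - U 0 n := rfl
      rwa [this] at h
    have hcoordV : |V n - W n| ≤ ‖V - W‖ := by
      have h := coord_le_norm (V - W) n
      have : (V - W) n = V n - W n := rfl
      rwa [this] at h
    have h6 : |(V - W) n| = |V n - W n| := rfl
    rw [h6]
    calc |(F (V n - b n) - F (W n - b n) - κd (W n - b n) * (V n - W n))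
          + (κd (W n - b n) - κd z) * (V n - W n)|
        ≤ |F (V n - b n) - F (W n - b n) - κd (W n - b n) * (V n - W n)|
          + |(κd (W n - b n) - κd z) * (V n - W n)| := abs_add_le _ _
      _ ≤ L₂ / 2 * (V n - W n) ^ 2 + (L₂ * |W n - U 0 n|) * |V n - W n| := by
          rw [abs_mul]
          exact add_le_add hq (mul_le_mul_of_nonneg_right hl (abs_nonneg _))
      _ ≤ L₂ * (‖W - U 0‖ + ‖V - W‖ / 2) * |V n - W n| := by
          nlinarith [abs_nonneg (V n - W n), abs_nonneg (W n - U 0 n), hL₂pos.le,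
            sq_abs (V n - W n), norm_nonneg (V - W), norm_nonneg (W - U 0),
            mul_le_mul_of_nonneg_right hcoordV (abs_nonneg (V n - W n)),
            mul_le_mul_of_nonneg_right hcoordW (abs_nonneg (V n - W n))]
  -- the majorant sequence
  obtain ⟨ω, hω⟩ : ∃ w : ℝ, w = L₂ / c₁ := ⟨_, rfl⟩
  have hωpos : 0 < ω := by rw [hω]; exact div_pos hL₂pos hc₁
  obtain ⟨α, hα⟩ : ∃ a : ℝ, a = ‖U 1 - U 0‖ := ⟨_, rfl⟩
  have hαnn : 0 ≤ α := by rw [hα]; exact norm_nonneg _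
  have hh₀' : h₀ = ω * α := by rw [hω, hα]; exact hh₀
  have hh₀nn : 0 ≤ h₀ := by rw [hh₀']; positivity
  have h1h₀ : 0 ≤ 1 - 2 * h₀ := by linarith
  have hqsq : Real.sqrt (1 - 2 * h₀) ^ 2 = 1 - 2 * h₀ := Real.sq_sqrt h1h₀
  have hqnn : 0 ≤ Real.sqrt (1 - 2 * h₀) := Real.sqrt_nonneg _
  have hqle : Real.sqrt (1 - 2 * h₀) ≤ 1 := by nlinarith [hqsq, hqnn, hh₀nn]
  have hρnn : 0 ≤ ρ := by
    rw [hρ]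
    apply div_nonneg (mul_nonneg (by linarith) hc₁.le) hL₂pos.le
  have hρfix : ω / 2 * ρ ^ 2 + α = ρ := by
    have hα' : α = h₀ * c₁ / L₂ := by
      rw [hh₀']
      rw [hω]; field_simp
    rw [hρ, hω, hα']
    field_simp
    linear_combination hqsq
  obtain ⟨t, ht0, hts⟩ : ∃ t : ℕ → ℝ, t 0 = 0 ∧ ∀ s, t (s + 1) = ω / 2 * (t s) ^ 2 + α :=
    ⟨majSeq ω α, majSeq_zero ω α, majSeq_succ ω α⟩
  have htnn : ∀ s, 0 ≤ t s := by
    intro s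
    induction s with
    | zero => rw [ht0]
    | succ s ih => rw [hts]; positivity
  have htle : ∀ s, t s ≤ ρ := by
    intro s
    induction s with
    | zero => rw [ht0]; exact hρnn
    | succ s ih =>
      have h1 := hts s
      have hfact : 0 ≤ (ρ - t s) * (ρ + t s) :=
        mul_nonneg (by linarith) (by linarith [htnn s, hρnn])
      nlinarith [hfact, hωpos.le, hρfix]
  have htmono : ∀ s, t s ≤ t (s + 1) := by
    intro s
    induction s with
    | zero =>
      have h1 := hts 0
      rw [ht0] at h1 ⊢
      rw [h1]
      positivity
    | succ s ih =>
      have h1 := hts s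
      have h2 := hts (s + 1)
      have hfact : 0 ≤ (t (s + 1) - t s) * (t (s + 1) + t s) :=
        mul_nonneg (by linarith) (by linarith [htnn s, htnn (s + 1)])
      nlinarith [hfact, hωpos.le]
  -- the main induction
  have hmain : ∀ s, ‖U s - U 0‖ ≤ t s ∧ ‖U (s + 1) - U s‖ ≤ t (s + 1) - t s := by
    intro s
    induction s with
    | zero =>
      constructor
      · rw [ht0]; simp
      · have heq : t (0 + 1) - t 0 = α := by rw [hts 0, ht0]; ring
        rw [heq, hα]
    | succ s ih =>
      obtain ⟨ih1, ih2⟩ := ih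
      have hdist1 : ‖U (s + 1) - U 0‖ ≤ t (s + 1) := by
        have h1 : U (s + 1) - U 0 = (U (s + 1) - U s) + (U s - U 0) := by abel
        rw [h1]
        calc ‖(U (s + 1) - U s) + (U s - U 0)‖
            ≤ ‖U (s + 1) - U s‖ + ‖U s - U 0‖ := norm_add_le _ _
          _ ≤ (t (s + 1) - t s) + t s := add_le_add ih2 ih1
          _ = t (s + 1) := by ring
      refine ⟨hdist1, ?_⟩
      have hstep : U (s + 1 + 1) - U (s + 1) = -(B (R (U (s + 1)))) := by
        rw [hUrec (s + 1)]; abel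
      have hResid : R (U (s + 1)) = R (U (s + 1)) - R (U s) - A (U (s + 1) - U s) := by
        have h1 : U (s + 1) - U s = -(B (R (U s))) := by rw [hUrec s]; abel
        have h2 : A (U (s + 1) - U s) = -(R (U s)) := by rw [h1, map_neg, hABy]
        rw [h2]; abel
      have hnorm1 : ‖U (s + 1 + 1) - U (s + 1)‖ ≤ c₁⁻¹ * ‖R (U (s + 1))‖ := by
        rw [hstep, norm_neg]; exact hBnorm _
      have hnorm2 : ‖R (U (s + 1))‖
          ≤ L₂ * (‖U s - U 0‖ + ‖U (s + 1) - U s‖ / 2) * ‖U (s + 1) - U s‖ := by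
        conv_lhs => rw [hResid]
        exact hest (U (s + 1)) (U s)
      have hchain : ‖U (s + 1 + 1) - U (s + 1)‖
          ≤ c₁⁻¹ * (L₂ * (‖U s - U 0‖ + ‖U (s + 1) - U s‖ / 2) * ‖U (s + 1) - U s‖) :=
        le_trans hnorm1 (mul_le_mul_of_nonneg_left hnorm2 (by positivity))
      have hfinal : c₁⁻¹ * (L₂ * (‖U s - U 0‖ + ‖U (s + 1) - U s‖ / 2) * ‖U (s + 1) - U s‖)
          ≤ t (s + 1 + 1) - t (s + 1) := by
        have hd : ‖U (s + 1) - U s‖ ≤ t (s + 1) - t s := ih2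
        have hnn1 : 0 ≤ ‖U (s + 1) - U s‖ := norm_nonneg _
        have hnn2 : 0 ≤ ‖U s - U 0‖ := norm_nonneg _
        have hωc : c₁⁻¹ * L₂ = ω := by rw [hω]; field_simp
        have hts' : 0 ≤ t s := htnn s
        have hdm : t s ≤ t (s + 1) := htmono s
        have key : (‖U s - U 0‖ + ‖U (s + 1) - U s‖ / 2) * ‖U (s + 1) - U s‖
            ≤ (t s + (t (s + 1) - t s) / 2) * (t (s + 1) - t s) := by
          have e1 : (‖U s - U 0‖ + ‖U (s + 1) - U s‖ / 2) * ‖U (s + 1) - U s‖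
              ≤ (t s + (t (s + 1) - t s) / 2) * ‖U (s + 1) - U s‖ := by
            apply mul_le_mul_of_nonneg_right _ hnn1
            linarith [ih1, ih2]
          have e2 : (t s + (t (s + 1) - t s) / 2) * ‖U (s + 1) - U s‖
              ≤ (t s + (t (s + 1) - t s) / 2) * (t (s + 1) - t s) := by
            apply mul_le_mul_of_nonneg_left hd
            linarith
          linarith
        calc c₁⁻¹ * (L₂ * (‖U s - U 0‖ + ‖U (s + 1) - U s‖ / 2) * ‖U (s + 1) - U s‖)
            = ω * ((‖U s - U 0‖ + ‖U (s + 1) - U s‖ / 2) * ‖U (s + 1) - U s‖) := by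
              rw [← hωc]; ring
          _ ≤ ω * ((t s + (t (s + 1) - t s) / 2) * (t (s + 1) - t s)) :=
              mul_le_mul_of_nonneg_left key hωpos.le
          _ = t (s + 1 + 1) - t (s + 1) := by
              rw [hts (s + 1), hts s]; ring
      exact le_trans hchain hfinal
  have hball : ∀ s, U s ∈ closedBall (U 0) ρ := by
    intro s
    rw [mem_closedBall, dist_eq_norm]
    exact le_trans (hmain s).1 (htle s)
  refine ⟨hball, ?_⟩
  have hsummable : Summable (fun s => t (s + 1) - t s) := by
    apply summable_of_sum_range_le (c := ρ) (fun n => by linarith [htmono n])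
    intro n
    rw [Finset.sum_range_sub t, ht0, sub_zero]
    exact htle n
  have hcauchy : CauchySeq U := by
    apply cauchySeq_of_dist_le_of_summable (fun s => t (s + 1) - t s) _ hsummable
    intro n
    rw [dist_eq_norm, norm_sub_rev]
    exact (hmain n).2
  obtain ⟨Ustar, hlim⟩ := cauchySeq_tendsto_of_complete hcauchy
  have hUstar_ball : Ustar ∈ closedBall (U 0) ρ :=
    isClosed_closedBall.mem_of_tendsto hlim (Eventually.of_forall hball)
  have hRA : ∀ s, R (U s) = A (U s - U (s + 1)) := by
    intro s
    have h1 : U s - U (s + 1) = B (R (U s)) := by rw [hUrec s]; abel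
    rw [h1, hABy]
  have hlim1 : Tendsto (fun s => R (U s)) atTop (nhds 0) := by
    have h2 : Tendsto (fun s => U s - U (s + 1)) atTop (nhds 0) := by
      have h3 := hlim.sub (hlim.comp (tendsto_add_atTop_nat 1))
      simpa using h3
    have h4 : Tendsto (fun s => A (U s - U (s + 1))) atTop (nhds (A 0)) :=
      (A.continuous.tendsto 0).comp h2
    rw [map_zero] at h4
    exact h4.congr (fun s => (hRA s).symm)
  have hlime : Tendsto (fun s => ‖U s - Ustar‖) atTop (nhds 0) :=
    tendsto_iff_norm_sub_tendsto_zero.mp hlim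
  have hlim2 : Tendsto (fun s => R (U s)) atTop (nhds (R Ustar)) := by
    rw [tendsto_iff_norm_sub_tendsto_zero]
    apply squeeze_zero (g := fun s =>
      (L₂ * (‖Ustar - U 0‖ + ‖U s - Ustar‖ / 2) + ‖A‖) * ‖U s - Ustar‖)
      (fun s => norm_nonneg _) ?_ ?_
    · intro s
      have h5 : R (U s) - R Ustar
          = (R (U s) - R Ustar - A (U s - Ustar)) + A (U s - Ustar) := by abel
      rw [h5]
      calc ‖(R (U s) - R Ustar - A (U s - Ustar)) + A (U s - Ustar)‖
          ≤ ‖R (U s) - R Ustar - A (U s - Ustar)‖ + ‖A (U s - Ustar)‖ := norm_add_le _ _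
        _ ≤ L₂ * (‖Ustar - U 0‖ + ‖U s - Ustar‖ / 2) * ‖U s - Ustar‖
            + ‖A‖ * ‖U s - Ustar‖ := add_le_add (hest (U s) Ustar) (A.le_opNorm _)
        _ = (L₂ * (‖Ustar - U 0‖ + ‖U s - Ustar‖ / 2) + ‖A‖) * ‖U s - Ustar‖ := by ring
    · have h6 : Tendsto (fun s =>
          (L₂ * (‖Ustar - U 0‖ + ‖U s - Ustar‖ / 2) + ‖A‖) * ‖U s - Ustar‖) atTop
          (nhds ((L₂ * (‖Ustar - U 0‖ + 0 / 2) + ‖A‖) * 0)) := by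
        apply Tendsto.mul _ hlime
        apply Tendsto.add _ tendsto_const_nhds
        apply Tendsto.const_mul
        exact Tendsto.const_add _ (hlime.div_const 2)
      simpa using h6
  have hRzero : R Ustar = 0 := tendsto_nhds_unique hlim2 hlim1
  exact ⟨Ustar, hUstar_ball, hlim, hRzero⟩
end
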